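/- arXiv:2201.11929 — 4 statements merged into one kernel-verified Lean document; each statement's English description precedes it below -/
import Mathlib

section
/- Let C be a code of length m over {0,1} such that any two distinct codewords have Hamming distance at least (1/2 - ε)·m. Then any three pairwise distinct codewords c1, c2, c3 agree simultaneously (i.e., c1[i] = c2[i] = c3[i]) on at most (1/4 + (3/2)ε)·m coordinates. -/
/-- Any three pairwise distinct codewords of a binary code of length `m` with
relative distance `1/2 - ε` agree simultaneously on at most `(1/4 + (3/2)ε)·m`
coordinates. -/
theorem stmt_0 (m : ℕ) (hm : 0 < m) (ε : ℝ) (hε : 0 ≤ ε)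
    (C : Set (Fin m → Bool))
    (hdist : ∀ c ∈ C, ∀ c' ∈ C, c ≠ c' → (1/2 - ε) * m ≤ (hammingDist c c' : ℝ))
    (c1 c2 c3 : Fin m → Bool) (h1 : c1 ∈ C) (h2 : c2 ∈ C) (h3 : c3 ∈ C)
    (h12 : c1 ≠ c2) (h13 : c1 ≠ c3) (h23 : c2 ≠ c3) :
    ((Finset.univ.filter (fun i : Fin m => c1 i = c2 i ∧ c2 i = c3 i)).card : ℝ)
      ≤ (1/4 + (3/2) * ε) * m := by
  have d12 := hdist c1 h1 c2 h2 h12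
  have d13 := hdist c1 h1 c3 h3 h13
  have d23 := hdist c2 h2 c3 h3 h23
  have key : hammingDist c1 c2 + hammingDist c1 c3 + hammingDist c2 c3 +
      2 * (Finset.univ.filter (fun i : Fin m => c1 i = c2 i ∧ c2 i = c3 i)).card
      ≤ 2 * m := by
    simp only [hammingDist, Finset.card_filter]
    rw [← Finset.sum_add_distrib, ← Finset.sum_add_distrib, Finset.mul_sum,
      ← Finset.sum_add_distrib]
    have : 2 * m = ∑ _i : Fin m, 2 := by simp [mul_comm]
    rw [this]
    apply Finset.sum_le_sum
    intro i _
    rcases Bool.eq_false_or_eq_true (c1 i) with h | h <;>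
      rcases Bool.eq_false_or_eq_true (c2 i) with h' | h' <;>
      rcases Bool.eq_false_or_eq_true (c3 i) with h'' | h'' <;>
      simp [h, h', h'']
  have keyR : (hammingDist c1 c2 : ℝ) + hammingDist c1 c3 + hammingDist c2 c3 +
      2 * ((Finset.univ.filter (fun i : Fin m => c1 i = c2 i ∧ c2 i = c3 i)).card : ℝ)
      ≤ 2 * m := by exact_mod_cast key
  linarith
end

section
/- Let C' : {0,1}^n → {0,1}^m be a code such that for any two distinct inputs x ≠ x', at most an ε fraction of the m/α length-α blocks of C'(x) and C'(x') are equal (as blocks). Let E : {0,1}^α → {0,1}^p be a code with relative distance at least (1/2 - ε). Define C(x) as the concatenation over all blocks j of E applied to the j-th block of C'(x). Then C has relative distance at least (1/2 - ε)(1 - ε), which is greater than 1/2 - (3/2)ε for ε ∈ (0,1). -/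
/-- The coordinate of the `i`-th symbol of the `j`-th length-`α` block of a string of
length `m`, where `α ∣ m`. -/
def blockEmbed {m α : ℕ} (hα : α ∣ m) (j : Fin (m / α)) (i : Fin α) : Fin m :=
  ⟨(j : ℕ) * α + (i : ℕ), by
    have h : (m / α) * α = m := Nat.div_mul_cancel hα
    have hj : (j : ℕ) < m / α := j.isLt
    have hi : (i : ℕ) < α := i.isLt
    calc (j : ℕ) * α + (i : ℕ) < ((j : ℕ) + 1) * α := by nlinarith
      _ ≤ (m / α) * α := Nat.mul_le_mul_right _ (by omega)
      _ = m := h⟩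

/-- Concatenating a relative-distance-`(1/2 - ε)` code `E` over the blocks of a code
`C'` whose distinct codewords agree on at most an `ε` fraction of blocks yields a code
of relative distance at least `(1/2 - ε)(1 - ε)`, which is greater than `1/2 - (3/2)ε`. -/
theorem stmt_6 (n m α p : ℕ) (hαpos : 0 < α) (hα : α ∣ m) (hp : 0 < p)
    (ε : ℝ) (hε0 : 0 < ε) (hε1 : ε < 1)
    (C' : (Fin n → Bool) → Fin m → Bool)
    (E : (Fin α → Bool) → Fin p → Bool)
    (hC' : ∀ x x' : Fin n → Bool, x ≠ x' →
      ((Finset.univ.filter (fun j : Fin (m / α) =>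
          (fun i : Fin α => C' x (blockEmbed hα j i))
            = (fun i : Fin α => C' x' (blockEmbed hα j i)))).card : ℝ)
        ≤ ε * ((m : ℝ) / α))
    (hE : ∀ u v : Fin α → Bool, u ≠ v → (1/2 - ε) * p ≤ (hammingDist (E u) (E v) : ℝ)) :
    (∀ x x' : Fin n → Bool, x ≠ x' →
      (1/2 - ε) * (1 - ε) * (((m : ℝ) / α) * p)
        ≤ ((Finset.univ.filter (fun q : Fin (m / α) × Fin p =>
            E (fun i : Fin α => C' x (blockEmbed hα q.1 i)) q.2
              ≠ E (fun i : Fin α => C' x' (blockEmbed hα q.1 i)) q.2)).card : ℝ))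
    ∧ (1/2 - (3/2) * ε : ℝ) < (1/2 - ε) * (1 - ε) := by
  constructor
  · intro x x' hxx
    set u : Fin (m/α) → Fin α → Bool := fun j i => C' x (blockEmbed hα j i) with hu
    set v : Fin (m/α) → Fin α → Bool := fun j i => C' x' (blockEmbed hα j i) with hv
    have hcast : ((m / α : ℕ) : ℝ) = (m : ℝ) / α := by
      rw [Nat.cast_div hα (by positivity)]
    -- card as sum of hamming distances
    have hcard : ((Finset.univ.filter (fun q : Fin (m / α) × Fin p =>
            E (fun i : Fin α => C' x (blockEmbed hα q.1 i)) q.2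
              ≠ E (fun i : Fin α => C' x' (blockEmbed hα q.1 i)) q.2)).card : ℕ)
        = ∑ j : Fin (m/α), hammingDist (E (u j)) (E (v j)) := by
      rw [Finset.card_filter, Fintype.sum_prod_type]
      refine Finset.sum_congr rfl fun j _ => ?_
      rw [hammingDist, Finset.card_filter]
    by_cases hhalf : (1/2 - ε : ℝ) ≤ 0
    · calc (1/2 - ε) * (1 - ε) * (((m : ℝ) / α) * p)
          ≤ 0 := by
            apply mul_nonpos_of_nonpos_of_nonneg
            · apply mul_nonpos_of_nonpos_of_nonneg hhalf; linarith
            · positivity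
        _ ≤ _ := by positivity
    push_neg at hhalf
    set S := Finset.univ.filter (fun j : Fin (m / α) =>
          (fun i : Fin α => C' x (blockEmbed hα j i))
            = (fun i : Fin α => C' x' (blockEmbed hα j i))) with hS
    have hSc : (Sᶜ.card : ℝ) ≥ (1 - ε) * ((m:ℝ)/α) := by
      have h1 : (S.card : ℝ) ≤ ε * ((m : ℝ) / α) := hC' x x' hxx
      have h2 : Sᶜ.card = Fintype.card (Fin (m/α)) - S.card := Finset.card_compl S
      have h3 : S.card ≤ Fintype.card (Fin (m/α)) := Finset.card_le_univ S
      have h4 : ((Fintype.card (Fin (m/α)) : ℕ) : ℝ) = (m:ℝ)/α := by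
        simp [hcast]
      have : (Sᶜ.card : ℝ) = (m:ℝ)/α - S.card := by
        rw [h2, Nat.cast_sub h3, h4]
      rw [this]; nlinarith
    have hsum : ((m:ℝ)/α) * p * ((1 - ε) * (1/2 - ε))
        ≤ ∑ j : Fin (m/α), (hammingDist (E (u j)) (E (v j)) : ℝ) := by
      have step : ∀ j ∈ Sᶜ, (1/2 - ε) * p ≤ (hammingDist (E (u j)) (E (v j)) : ℝ) := by
        intro j hj
        apply hE
        simp only [hS, Finset.mem_compl, Finset.mem_filter, Finset.mem_univ, true_and] at hj
        exact hj
      calc ((m:ℝ)/α) * p * ((1 - ε) * (1/2 - ε))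
          = ((1 - ε) * ((m:ℝ)/α)) * ((1/2 - ε) * p) := by ring
        _ ≤ (Sᶜ.card : ℝ) * ((1/2 - ε) * p) :=
            mul_le_mul_of_nonneg_right hSc (by positivity)
        _ = ∑ j ∈ Sᶜ, ((1/2 - ε) * p : ℝ) := by rw [Finset.sum_const, nsmul_eq_mul]
        _ ≤ ∑ j ∈ Sᶜ, (hammingDist (E (u j)) (E (v j)) : ℝ) := Finset.sum_le_sum step
        _ ≤ ∑ j : Fin (m/α), (hammingDist (E (u j)) (E (v j)) : ℝ) := by
            apply Finset.sum_le_sum_of_subset_of_nonneg (Finset.subset_univ _)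
            intros; positivity
    calc (1/2 - ε) * (1 - ε) * (((m : ℝ) / α) * p)
        = ((m:ℝ)/α) * p * ((1 - ε) * (1/2 - ε)) := by ring
      _ ≤ ∑ j : Fin (m/α), (hammingDist (E (u j)) (E (v j)) : ℝ) := hsum
      _ = _ := by rw [← Nat.cast_sum, ← hcard]
  · nlinarith
end

section
/- Let C ⊆ {0,1}^m be a code with minimum relative distance at least 1/2 - ε where ε < 1/6. If a received word has fewer than (3/4 - (3/2)ε)·m erased coordinates, then at most two codewords of C are consistent with the received word (agree with it on all unerased coordinates). -/
/-- If a binary code has minimum relative distance `1/2 - ε` with `ε < 1/6`, and fewer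
than `(3/4 - (3/2)ε)·m` coordinates of a received word are erased, then at most two
codewords are consistent with the received word. -/
theorem stmt_8 (m : ℕ) (hm : 0 < m) (ε : ℝ) (hε0 : 0 ≤ ε) (hε : ε < 1/6)
    (C : Set (Fin m → Bool))
    (hdist : ∀ c ∈ C, ∀ c' ∈ C, c ≠ c' → (1/2 - ε) * m ≤ (hammingDist c c' : ℝ))
    (w : Fin m → Option Bool)
    (herase : ((Finset.univ.filter (fun i : Fin m => w i = none)).card : ℝ)
      < (3/4 - (3/2) * ε) * m)
    (c1 c2 c3 : Fin m → Bool) (h1 : c1 ∈ C) (h2 : c2 ∈ C) (h3 : c3 ∈ C)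
    (hc1 : ∀ i b, w i = some b → c1 i = b)
    (hc2 : ∀ i b, w i = some b → c2 i = b)
    (hc3 : ∀ i b, w i = some b → c3 i = b) :
    c1 = c2 ∨ c1 = c3 ∨ c2 = c3 := by
  by_contra h
  push_neg at h
  obtain ⟨h12, h13, h23⟩ := h
  set Nb := (Finset.univ.filter fun i : Fin m => ¬ (c1 i = c2 i ∧ c2 i = c3 i)) with hNb
  set E := (Finset.univ.filter (fun i : Fin m => w i = none)) with hE
  have hdef : ∀ a b : Fin m → Bool,
      hammingDist a b = ∑ i : Fin m, if a i ≠ b i then 1 else 0 := by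
    intro a b
    rw [hammingDist, Finset.card_filter]
  have hsum : hammingDist c1 c2 + hammingDist c1 c3 + hammingDist c2 c3
      ≤ 2 * Nb.card := by
    rw [hdef, hdef, hdef, hNb, Finset.card_filter, ← Finset.sum_add_distrib,
      ← Finset.sum_add_distrib, Finset.mul_sum]
    apply Finset.sum_le_sum
    intro i _
    cases hb1 : c1 i <;> cases hb2 : c2 i <;> cases hb3 : c3 i <;> simp
  have hsub : Nb ⊆ E := by
    intro i hi
    rw [hNb, Finset.mem_filter] at hi
    rw [hE, Finset.mem_filter]
    refine ⟨Finset.mem_univ _, ?_⟩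
    by_contra hw
    rcases Option.ne_none_iff_exists'.mp hw with ⟨b, hb⟩
    exact hi.2 ⟨(hc1 i b hb).trans (hc2 i b hb).symm, (hc2 i b hb).trans (hc3 i b hb).symm⟩
  have hcard : (Nb.card : ℝ) ≤ E.card := by exact_mod_cast Finset.card_le_card hsub
  have d12 := hdist c1 h1 c2 h2 h12
  have d13 := hdist c1 h1 c3 h3 h13
  have d23 := hdist c2 h2 c3 h3 h23
  have hsumR : (hammingDist c1 c2 : ℝ) + hammingDist c1 c3 + hammingDist c2 c3
      ≤ 2 * Nb.card := by exact_mod_cast hsum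
  linarith
end

section
/- For binary codes: if C ⊆ {0,1}^m contains N codewords with pairwise Hamming distance at least d and d > m/2, then N ≤ 2d/(2d - m) (the Plotkin bound). In particular, for relative distance strictly greater than 1/2, the number of codewords is bounded by a constant independent of m. -/
lemma coord_bound {m : ℕ} (C : Finset (Fin m → Bool)) (i : Fin m) :
    2 * (∑ c ∈ C, ∑ c' ∈ C, (if c i ≠ c' i then 1 else 0)) ≤ C.card * C.card := by
  classical
  set T := C.filter (fun c => c i = true) with hT
  set F := C.filter (fun c => ¬ c i = true) with hF
  have hinner : ∀ c ∈ C, (∑ c' ∈ C, (if c i ≠ c' i then 1 else 0))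
      = if c i = true then F.card else T.card := by
    intro c _
    rw [Finset.sum_boole, Nat.cast_id]
    by_cases h : c i = true
    · simp only [h, if_true, hF]
      congr 1
      ext c'
      simp only [Finset.mem_filter, and_congr_right_iff]
      intro _
      cases hc' : c' i <;> simp [h, hc']
    · have h' : c i = false := by cases hc : c i <;> simp_all
      simp only [h, if_false, hT]
      congr 1
      ext c'
      simp only [Finset.mem_filter, and_congr_right_iff]
      intro _
      cases hc' : c' i <;> simp [h', hc']
  rw [Finset.sum_congr rfl hinner]
  rw [Finset.sum_ite, Finset.sum_const, Finset.sum_const, smul_eq_mul, smul_eq_mul]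
  have hcard : T.card + F.card = C.card := Finset.card_filter_add_card_filter_not _
  nlinarith [sq_nonneg (T.card - F.card : ℤ), hcard]

/-- Plotkin bound: a binary code of length `m` with pairwise distance at least `d`
where `2d > m` has at most `2d/(2d - m)` codewords. -/
theorem stmt_11 (m d : ℕ) (hd : 0 < d) (hm : 0 < m) (hplot : m < 2 * d)
    (C : Finset (Fin m → Bool))
    (hdist : ∀ c ∈ C, ∀ c' ∈ C, c ≠ c' → d ≤ hammingDist c c') :
    (C.card : ℝ) ≤ (2 * d : ℝ) / (2 * d - m) := by
  classical
  set N := C.card with hN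
  have hdm : (0:ℝ) < 2 * d - m := by
    have : (m:ℝ) < 2 * d := by exact_mod_cast hplot
    linarith
  have hdR : (0:ℝ) < d := by exact_mod_cast hd
  rcases Nat.eq_zero_or_pos N with hN0 | hN0
  · rw [hN0]
    push_cast
    exact le_of_lt (div_pos (by positivity) hdm)
  -- upper bound on sum of pairwise distances
  have hup : 2 * (∑ c ∈ C, ∑ c' ∈ C, hammingDist c c') ≤ m * (N * N) := by
    have hdist_eq : ∀ c c' : Fin m → Bool,
        hammingDist c c' = ∑ i : Fin m, (if c i ≠ c' i then 1 else 0) := by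
      intro c c'
      simp [hammingDist, Finset.card_filter]
    calc 2 * (∑ c ∈ C, ∑ c' ∈ C, hammingDist c c')
        = 2 * ∑ i : Fin m, ∑ c ∈ C, ∑ c' ∈ C, (if c i ≠ c' i then 1 else 0) := by
          congr 1
          simp_rw [hdist_eq]
          exact (Finset.sum_congr rfl fun c _ => Finset.sum_comm).trans Finset.sum_comm
      _ = ∑ i : Fin m, 2 * ∑ c ∈ C, ∑ c' ∈ C, (if c i ≠ c' i then 1 else 0) := by
          rw [Finset.mul_sum]
      _ ≤ ∑ _i : Fin m, N * N := Finset.sum_le_sum (fun i _ => coord_bound C i)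
      _ = m * (N * N) := by simp [mul_comm]
  -- lower bound
  have hlow : d * (N * (N - 1)) ≤ ∑ c ∈ C, ∑ c' ∈ C, hammingDist c c' := by
    have h1 : ∀ c ∈ C, d * (N - 1) ≤ ∑ c' ∈ C, hammingDist c c' := by
      intro c hc
      have h2 : d * (N - 1) ≤ ∑ c' ∈ C.erase c, hammingDist c c' := by
        have := Finset.card_nsmul_le_sum (C.erase c) (fun c' => hammingDist c c') d
          (fun c' hc' => hdist c hc c' (Finset.mem_of_mem_erase hc')
            (Ne.symm (Finset.ne_of_mem_erase hc')))
        simpa [Finset.card_erase_of_mem hc, mul_comm] using this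
      refine h2.trans (Finset.sum_le_sum_of_subset (Finset.erase_subset _ _))
    calc d * (N * (N - 1)) = N * (d * (N - 1)) := by ring
      _ ≤ ∑ c ∈ C, ∑ c' ∈ C, hammingDist c c' := by
          have := Finset.card_nsmul_le_sum C (fun c => ∑ c' ∈ C, hammingDist c c')
            (d * (N - 1)) h1
          simpa using this
  have key : 2 * (d * (N * (N - 1))) ≤ m * (N * N) := by
    calc 2 * (d * (N * (N - 1))) ≤ 2 * ∑ c ∈ C, ∑ c' ∈ C, hammingDist c c' :=
          Nat.mul_le_mul_left 2 hlow
      _ ≤ m * (N * N) := hup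
  -- cast to ℝ
  have hNR : (1:ℝ) ≤ (N:ℝ) := by exact_mod_cast hN0
  have hc : ((N - 1 : ℕ) : ℝ) = (N:ℝ) - 1 := by
    rw [Nat.cast_sub hN0]; simp
  have keyR : 2 * ((d:ℝ) * ((N:ℝ) * ((N:ℝ) - 1))) ≤ (m:ℝ) * ((N:ℝ) * (N:ℝ)) := by
    have h := (Nat.cast_le (α := ℝ)).mpr key
    push_cast [hc] at h
    linarith
  rw [le_div_iff₀ hdm]
  have hNpos : (0:ℝ) < N := by linarith
  nlinarith [keyR, hNpos]
end
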